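/- arXiv:2409.04479 — 2 statements merged into one kernel-verified Lean document; each statement's English description precedes it below -/
import Mathlib

section
/- Let g : ℝ^d → ℝ be measurable, positively homogeneous of degree 1 (g(c • x) = c · g(x) for c ≥ 0), with 0 < vol({x : g(x) ≤ 1}) < ∞. Fix x* ∈ ℝ^d, real numbers y_min < y_max, and define the conic benchmark function f(x) = y_min + g(x − x*) with domain Ω = {x : f(x) ≤ y_max}. Then for every t with y_min < t ≤ y_max, the absolute rank satisfies v₁(t) = vol({x ∈ Ω : f(x) ≤ t}) / vol(Ω) = ((t − y_min)/(y_max − y_min))^d. -/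
open MeasureTheory Pointwise

lemma conic_sublevel_vol (d : ℕ) (g : (Fin d → ℝ) → ℝ)
    (hhom : ∀ c : ℝ, 0 ≤ c → ∀ x : Fin d → ℝ, g (c • x) = c * g x)
    (xstar : Fin d → ℝ) {a : ℝ} (ha : 0 < a) :
    volume {x : Fin d → ℝ | g (x - xstar) ≤ a}
      = ENNReal.ofReal (a ^ d) * volume {x : Fin d → ℝ | g x ≤ 1} := by
  have hset : {x : Fin d → ℝ | g (x - xstar) ≤ a}
      = (fun x => x - xstar) ⁻¹' (a • {x : Fin d → ℝ | g x ≤ 1}) := by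
    ext x
    simp only [Set.mem_setOf_eq, Set.mem_preimage,
      Set.mem_smul_set_iff_inv_smul_mem₀ ha.ne']
    rw [hhom a⁻¹ (by positivity), inv_mul_le_iff₀ ha, mul_one]
  have htrans : volume ((fun x => x - xstar) ⁻¹'
      (a • {x : Fin d → ℝ | g x ≤ 1}))
      = volume (a • {x : Fin d → ℝ | g x ≤ 1}) := by
    have : (fun x : Fin d → ℝ => x - xstar) = (fun x => x + (-xstar)) := by
      funext x; rw [sub_eq_add_neg]
    rw [this, measure_preimage_add_right]
  rw [hset, htrans, Measure.addHaar_smul_of_nonneg volume ha.le]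
  congr 2
  simp

/-- For a conic benchmark function `f(x) = y_min + g(x - x*)`, with `g` measurable and
positively homogeneous of degree 1 and `0 < vol{g ≤ 1} < ∞`, the absolute rank on the
domain `Ω = {f ≤ y_max}` satisfies
`v₁(t) = vol{x ∈ Ω | f x ≤ t} / vol Ω = ((t - y_min)/(y_max - y_min))^d`
for every `t` with `y_min < t ≤ y_max`. -/
theorem conic_absolute_rank (d : ℕ) (g : (Fin d → ℝ) → ℝ) (hg : Measurable g)
    (hhom : ∀ c : ℝ, 0 ≤ c → ∀ x : Fin d → ℝ, g (c • x) = c * g x)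
    (h0 : 0 < volume {x : Fin d → ℝ | g x ≤ 1})
    (hfin : volume {x : Fin d → ℝ | g x ≤ 1} < ⊤)
    (xstar : Fin d → ℝ) (ymin ymax : ℝ) (hy : ymin < ymax)
    (f : (Fin d → ℝ) → ℝ) (hf : ∀ x, f x = ymin + g (x - xstar))
    (Ω : Set (Fin d → ℝ)) (hΩ : Ω = {x : Fin d → ℝ | f x ≤ ymax})
    (t : ℝ) (ht1 : ymin < t) (ht2 : t ≤ ymax) :
    (volume {x ∈ Ω | f x ≤ t}).toReal / (volume Ω).toReal
      = ((t - ymin) / (ymax - ymin)) ^ d := by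
  have hsub : ∀ s : ℝ, {x : Fin d → ℝ | f x ≤ s} = {x | g (x - xstar) ≤ s - ymin} := by
    intro s; ext x; simp [hf, Set.mem_setOf_eq]; constructor <;> intro h <;> linarith
  have hst : {x ∈ Ω | f x ≤ t} = {x : Fin d → ℝ | f x ≤ t} := by
    ext x
    simp only [hΩ, Set.mem_setOf_eq, Set.mem_sep_iff, and_iff_right_iff_imp]
    intro h; linarith
  have hvt : volume {x ∈ Ω | f x ≤ t}
      = ENNReal.ofReal ((t - ymin) ^ d) * volume {x : Fin d → ℝ | g x ≤ 1} := by
    rw [hst, hsub]; exact conic_sublevel_vol d g hhom xstar (by linarith)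
  have hvΩ : volume Ω
      = ENNReal.ofReal ((ymax - ymin) ^ d) * volume {x : Fin d → ℝ | g x ≤ 1} := by
    rw [hΩ, hsub]; exact conic_sublevel_vol d g hhom xstar (by linarith)
  rw [hvt, hvΩ]
  rw [ENNReal.toReal_mul, ENNReal.toReal_mul, ENNReal.toReal_ofReal (pow_nonneg (by linarith) d),
    ENNReal.toReal_ofReal (pow_nonneg (by linarith) d)]
  have hK : (volume {x : Fin d → ℝ | g x ≤ 1}).toReal ≠ 0 := by
    simp [ENNReal.toReal_eq_zero_iff, h0.ne', hfin.ne]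
  rw [mul_div_mul_right _ _ hK, div_pow]
end

section
/- The average-rank comparison method exhibits Non-Independence from Irrelevant Alternatives (NIIA): there exist a matrix M : Fin 100 → Fin 500 → ℝ whose entries within each column are pairwise distinct, and three distinct row indices A, B, C, such that (i) for the within-column ranks computed over all 100 rows, R_{ij} = #{i' : M_{i'j} ≤ M_{ij}}, the average over the 500 columns of the ranks of row A is strictly less than that of row B, while (ii) for the within-column ranks computed over only the three rows {A, B, C}, the average over the 500 columns of the ranks of row A is strictly greater than that of row B. -/
open Finset
set_option maxRecDepth 10000

/-- Column type 1 values. -/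
def gRow (i : Fin 100) : ℕ :=
  if i = 0 then 2 else if i = 1 then 0 else if i = 2 then 1 else i.val

/-- Column type 2 values. -/
def hRow (i : Fin 100) : ℕ :=
  if i = 0 then 0 else if i = 1 then 98 else if i = 2 then 99 else i.val - 2

lemma sum_ite_fin500 (x y : ℝ) :
    (∑ j : Fin 500, (if (j : ℕ) < 200 then x else y)) = 200 * x + 300 * y := by
  rw [Finset.sum_ite]
  have h1 : (univ.filter (fun j : Fin 500 => (j : ℕ) < 200)).card = 200 := by decide
  have h2 : (univ.filter (fun j : Fin 500 => ¬ (j : ℕ) < 200)).card = 300 := by decide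
  rw [Finset.sum_const, Finset.sum_const, h1, h2]
  simp [nsmul_eq_mul]

/-- The average-rank comparison method exhibits Non-Independence from Irrelevant
Alternatives (NIIA): there is a `100 × 500` performance matrix `M` with pairwise
distinct entries in each column, and three distinct rows `A`, `B`, `C`, such that the
average over the columns of the within-column rank of `A` among all `100` rows is
strictly less than that of `B`, while the average over the columns of the within-column
rank of `A` among only the rows `{A, B, C}` is strictly greater than that of `B`. -/
theorem average_rank_NIIA :
    ∃ (M : Fin 100 → Fin 500 → ℝ) (A B C : Fin 100),
      A ≠ B ∧ A ≠ C ∧ B ≠ C ∧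
      (∀ j : Fin 500, Function.Injective (fun i : Fin 100 => M i j)) ∧
      ((∑ j : Fin 500,
          ((univ.filter (fun i' : Fin 100 => M i' j ≤ M A j)).card : ℝ)) / 500 <
        (∑ j : Fin 500,
          ((univ.filter (fun i' : Fin 100 => M i' j ≤ M B j)).card : ℝ)) / 500) ∧
      ((∑ j : Fin 500,
          ((({A, B, C} : Finset (Fin 100)).filter
            (fun i' => M i' j ≤ M A j)).card : ℝ)) / 500 >
        (∑ j : Fin 500,
          ((({A, B, C} : Finset (Fin 100)).filter
            (fun i' => M i' j ≤ M B j)).card : ℝ)) / 500) := by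
  refine ⟨fun i j => ((if (j : ℕ) < 200 then gRow i else hRow i : ℕ) : ℝ),
    0, 1, 2, by decide, by decide, by decide, ?_, ?_, ?_⟩
  · intro j i1 i2 hh
    by_cases hj : (j : ℕ) < 200 <;> simp only [hj, if_true, if_false,
      Nat.cast_inj] at hh
    · have hg : Function.Injective gRow := by decide
      exact hg hh
    · have hh' : Function.Injective hRow := by decide
      exact hh' hh
  · have hA : ∀ j : Fin 500,
        ((univ.filter (fun i' : Fin 100 =>
          ((if (j : ℕ) < 200 then gRow i' else hRow i' : ℕ) : ℝ) ≤
          ((if (j : ℕ) < 200 then gRow 0 else hRow 0 : ℕ) : ℝ))).card : ℝ) =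
        if (j : ℕ) < 200 then (3 : ℝ) else 1 := by
      intro j
      by_cases hj : (j : ℕ) < 200 <;> simp only [hj, if_true, if_false, Nat.cast_le]
      · norm_num [show (univ.filter (fun i' : Fin 100 => gRow i' ≤ gRow 0)).card = 3
          from by decide]
      · norm_num [show (univ.filter (fun i' : Fin 100 => hRow i' ≤ hRow 0)).card = 1
          from by decide]
    have hB : ∀ j : Fin 500,
        ((univ.filter (fun i' : Fin 100 =>
          ((if (j : ℕ) < 200 then gRow i' else hRow i' : ℕ) : ℝ) ≤
          ((if (j : ℕ) < 200 then gRow 1 else hRow 1 : ℕ) : ℝ))).card : ℝ) =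
        if (j : ℕ) < 200 then (1 : ℝ) else 99 := by
      intro j
      by_cases hj : (j : ℕ) < 200 <;> simp only [hj, if_true, if_false, Nat.cast_le]
      · norm_num [show (univ.filter (fun i' : Fin 100 => gRow i' ≤ gRow 1)).card = 1
          from by decide]
      · norm_num [show (univ.filter (fun i' : Fin 100 => hRow i' ≤ hRow 1)).card = 99
          from by decide]
    rw [Finset.sum_congr rfl (fun j _ => hA j), Finset.sum_congr rfl (fun j _ => hB j),
      sum_ite_fin500, sum_ite_fin500]
    norm_num
  · have hA : ∀ j : Fin 500,
        ((({0, 1, 2} : Finset (Fin 100)).filter (fun i' =>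
          ((if (j : ℕ) < 200 then gRow i' else hRow i' : ℕ) : ℝ) ≤
          ((if (j : ℕ) < 200 then gRow 0 else hRow 0 : ℕ) : ℝ))).card : ℝ) =
        if (j : ℕ) < 200 then (3 : ℝ) else 1 := by
      intro j
      by_cases hj : (j : ℕ) < 200 <;> simp only [hj, if_true, if_false, Nat.cast_le]
      · norm_num [show (({0, 1, 2} : Finset (Fin 100)).filter
          (fun i' => gRow i' ≤ gRow 0)).card = 3 from by decide]
      · norm_num [show (({0, 1, 2} : Finset (Fin 100)).filter
          (fun i' => hRow i' ≤ hRow 0)).card = 1 from by decide]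
    have hB : ∀ j : Fin 500,
        ((({0, 1, 2} : Finset (Fin 100)).filter (fun i' =>
          ((if (j : ℕ) < 200 then gRow i' else hRow i' : ℕ) : ℝ) ≤
          ((if (j : ℕ) < 200 then gRow 1 else hRow 1 : ℕ) : ℝ))).card : ℝ) =
        if (j : ℕ) < 200 then (1 : ℝ) else 2 := by
      intro j
      by_cases hj : (j : ℕ) < 200 <;> simp only [hj, if_true, if_false, Nat.cast_le]
      · norm_num [show (({0, 1, 2} : Finset (Fin 100)).filter
          (fun i' => gRow i' ≤ gRow 1)).card = 1 from by decide]
      · norm_num [show (({0, 1, 2} : Finset (Fin 100)).filter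
          (fun i' => hRow i' ≤ hRow 1)).card = 2 from by decide]
    rw [Finset.sum_congr rfl (fun j _ => hA j), Finset.sum_congr rfl (fun j _ => hB j),
      sum_ite_fin500, sum_ite_fin500]
    norm_num
end
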